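/- arXiv:0711.0334 — 2 statements merged into one kernel-verified Lean document; each statement's English description precedes it below -/
import Mathlib

section
/- Let K : [0,1] × [0,1] → ℝ be continuous and symmetric, i.e. K(x,y) = K(y,x) for all x, y ∈ [0,1]. Let (fₖ)ₖ∈ℕ be a sequence of continuous functions on [0,1] whose equivalence classes form a Hilbert basis of L²([0,1]; ℝ), and let (λₖ)ₖ∈ℕ be nonnegative real numbers such that ∫₀¹ K(x,y) fₖ(y) dy = λₖ fₖ(x) for every k and every x ∈ [0,1]. Then the series Σₖ λₖ converges and Σₖ λₖ = ∫₀¹ K(x,x) dx. -/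
/-! Mercer's argument. By Parseval in the basis `b`, the quadratic form of `K` on the indicator of
`U ⊆ [0, 1]` is `∑ λₖ (∫_U fₖ)²`, so every truncation `K - ∑_{k<n} λₖ fₖ ⊗ fₖ` is positive
semidefinite; being continuous, it is nonnegative on the diagonal: `∑_{k<n} λₖ fₖ(x)² ≤ K(x, x)`.
By Cauchy–Schwarz, for fixed `x` the series `∑ λₖ fₖ(x) fₖ(y)` then converges uniformly in `y`
to a continuous function with the same coefficients as `K(x, ·)`, so the two agree on `[0, 1]` and
`K(x, x) = ∑ λₖ fₖ(x)²`. Integrating term by term, with `∫ fₖ² = 1`, gives the trace formula. -/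

open Real Set MeasureTheory Filter Topology
open scoped InnerProductSpace ENNReal

theorem Finset.weighted_sum_mul_sq_le_sq_mul_sq {ι : Type*} (s : Finset ι) {w : ι → ℝ}
    (hw : ∀ i ∈ s, 0 ≤ w i) (u v : ι → ℝ) :
    (∑ i ∈ s, w i * u i * v i) ^ 2 ≤ (∑ i ∈ s, w i * u i ^ 2) * ∑ i ∈ s, w i * v i ^ 2 :=
  Finset.sum_sq_le_sum_mul_sum_of_sq_le_mul s
    (fun i hi => mul_nonneg (hw i hi) (sq_nonneg _))
    (fun i hi => mul_nonneg (hw i hi) (sq_nonneg _))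
    (fun i _ => le_of_eq (by ring))

theorem Summable.weighted_mul_of_sq {ι : Type*} {w u v : ι → ℝ} (hw : ∀ i, 0 ≤ w i)
    (hu : Summable fun i => w i * u i ^ 2) (hv : Summable fun i => w i * v i ^ 2) :
    Summable fun i => w i * u i * v i := by
  refine Summable.of_norm_bounded ((hu.add hv).div_const 2) fun i => ?_
  rw [Real.norm_eq_abs, abs_mul, abs_mul, abs_of_nonneg (hw i)]
  nlinarith [hw i, two_mul_le_add_sq |u i| |v i|, sq_abs (u i), sq_abs (v i)]

theorem tendstoUniformlyOn_tsum_weighted_mul {X : Type*} {w u : ℕ → ℝ} {v : ℕ → X → ℝ}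
    {s : Set X} {M : ℝ} (hw : ∀ k, 0 ≤ w k) (hu : Summable fun k => w k * u k ^ 2)
    (hv : ∀ y ∈ s, ∀ n, ∑ k ∈ Finset.range n, w k * v k y ^ 2 ≤ M) :
    TendstoUniformlyOn (fun n y => ∑ k ∈ Finset.range n, w k * u k * v k y)
      (fun y => ∑' k, w k * u k * v k y) atTop s := by
  have hv_Ico : ∀ y ∈ s, ∀ m n, ∑ k ∈ Finset.Ico m n, w k * v k y ^ 2 ≤ M := fun y hy m n =>
    (Finset.sum_le_sum_of_subset_of_nonneg (Finset.Ico_subset_Ico_left (Nat.zero_le m))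
      fun k _ _ => mul_nonneg (hw k) (sq_nonneg _)).trans (by simpa using hv y hy n)
  refine UniformCauchySeqOn.tendstoUniformlyOn_of_tendsto ?_ fun y hy =>
    (hu.weighted_mul_of_sq hw (summable_of_sum_range_le
      (fun k => mul_nonneg (hw k) (sq_nonneg _)) (hv y hy))).hasSum.tendsto_sum_nat
  rw [Metric.uniformCauchySeqOn_iff]
  intro ε hε
  -- By Cauchy–Schwarz, the square of a block `∑ k ∈ Ico m n, w k * u k * v k y` is at most `M`
  -- times the same block of the convergent series `∑ w k * u k ^ 2`.
  obtain ⟨N, hN⟩ := Metric.cauchySeq_iff.mp hu.hasSum.tendsto_sum_nat.cauchySeq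
    (ε ^ 2 / (|M| + 1)) (by positivity)
  suffices key : ∀ m n, N ≤ m → m ≤ n → ∀ y ∈ s,
      |∑ k ∈ Finset.Ico m n, w k * u k * v k y| < ε by
    refine ⟨N, fun m hm n hn y hy => ?_⟩
    rw [Real.dist_eq]
    rcases le_total m n with hmn | hnm
    · rw [abs_sub_comm, ← Finset.sum_Ico_eq_sub _ hmn]; exact key m n hm hmn y hy
    · rw [← Finset.sum_Ico_eq_sub _ hnm]; exact key n m hn hnm y hy
  intro m n hm hmn y hy
  have htail : ∑ k ∈ Finset.Ico m n, w k * u k ^ 2 < ε ^ 2 / (|M| + 1) := by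
    have := hN n (hm.trans hmn) m hm
    rw [Real.dist_eq, ← Finset.sum_Ico_eq_sub _ hmn] at this
    exact (le_abs_self _).trans_lt this
  refine abs_lt_of_sq_lt_sq ?_ hε.le
  calc (∑ k ∈ Finset.Ico m n, w k * u k * v k y) ^ 2
      ≤ (∑ k ∈ Finset.Ico m n, w k * u k ^ 2) * ∑ k ∈ Finset.Ico m n, w k * v k y ^ 2 :=
        Finset.weighted_sum_mul_sq_le_sq_mul_sq _ (fun k _ => hw k) _ _
    _ ≤ ε ^ 2 / (|M| + 1) * |M| := by
        gcongr
        · exact Finset.sum_nonneg fun k _ => mul_nonneg (hw k) (sq_nonneg _)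
        · exact (hv_Ico y hy m n).trans (le_abs_self M)
    _ < ε ^ 2 := by
        rw [div_mul_eq_mul_div, div_lt_iff₀ (by positivity)]
        nlinarith [abs_nonneg M, pow_pos hε 2]

namespace MeasureTheory

variable {α : Type*} [MeasurableSpace α] {μ : Measure α}

theorem L2.real_inner_eq_integral_of_ae_eq {u v : Lp ℝ 2 μ} {g h : α → ℝ}
    (hu : u =ᵐ[μ] g) (hv : v =ᵐ[μ] h) : ⟪u, v⟫_ℝ = ∫ x, g x * h x ∂μ := by
  rw [L2.inner_def]
  refine integral_congr_ae ?_
  filter_upwards [hu, hv] with x hux hvx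
  simp [hux, hvx, mul_comm]

theorem hasSum_integral_of_nonneg {F : ℕ → α → ℝ} {g : α → ℝ}
    (hF : ∀ n, AEStronglyMeasurable (F n) μ) (hF_nonneg : ∀ n, 0 ≤ᵐ[μ] F n) (hg : Integrable g μ)
    (hsum : ∀ᵐ x ∂μ, HasSum (fun n => F n x) (g x)) :
    HasSum (fun n => ∫ x, F n x ∂μ) (∫ x, g x ∂μ) := by
  refine hasSum_integral_of_dominated_convergence F hF (fun n => ?_)
    (hsum.mono fun x hx => hx.summable) (hg.congr (hsum.mono fun x hx => hx.tsum_eq.symm)) hsum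
  filter_upwards [hF_nonneg n] with x hx
  rw [Real.norm_eq_abs, abs_of_nonneg hx]

end MeasureTheory

namespace HilbertBasis

variable {α : Type*} [MeasurableSpace α] {μ : Measure α}

theorem integral_mul_eq_ite {ι : Type*} [DecidableEq ι] (b : HilbertBasis ι ℝ (Lp ℝ 2 μ))
    {f : ι → α → ℝ} (hb : ∀ k, b k =ᵐ[μ] f k) (i j : ι) :
    ∫ x, f i x * f j x ∂μ = if i = j then 1 else 0 := by
  rw [← L2.real_inner_eq_integral_of_ae_eq (hb i) (hb j)]
  exact orthonormal_iff_ite.mp b.orthonormal i j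

theorem integral_mul_eq_of_tendsto_sum [IsFiniteMeasure μ]
    (b : HilbertBasis ℕ ℝ (Lp ℝ 2 μ)) {f : ℕ → α → ℝ} (hb : ∀ k, b k =ᵐ[μ] f k)
    {a : ℕ → ℝ} {H : α → ℝ} {M : ℝ}
    (hbd : ∀ n, ∀ᵐ x ∂μ, |∑ k ∈ Finset.range n, a k * f k x| ≤ M)
    (hlim : ∀ᵐ x ∂μ, Tendsto (fun n => ∑ k ∈ Finset.range n, a k * f k x) atTop (𝓝 (H x)))
    (j : ℕ) : ∫ x, H x * f j x ∂μ = a j := by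
  have hf : ∀ k, MemLp (f k) 2 μ := fun k => (Lp.memLp (b k)).ae_eq (hb k)
  have hpartial : ∀ n, ∫ x, (∑ k ∈ Finset.range n, a k * f k x) * f j x ∂μ
      = if j ∈ Finset.range n then a j else 0 := by
    intro n
    simp_rw [Finset.sum_mul, mul_assoc]
    rw [integral_finsetSum _ fun k _ => by exact ((hf k).integrable_mul (hf j)).const_mul (a k)]
    simp_rw [integral_const_mul, b.integral_mul_eq_ite hb, mul_ite, mul_one, mul_zero]
    exact Finset.sum_ite_eq' _ _ _
  refine tendsto_nhds_unique (tendsto_integral_of_dominated_convergence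
    (F := fun n x => (∑ k ∈ Finset.range n, a k * f k x) * f j x) (fun x => M * |f j x|)
    (fun n => ?_) (((hf j).integrable one_le_two).abs.const_mul M) (fun n => ?_) ?_) ?_
  · exact (Finset.aestronglyMeasurable_fun_sum _ fun k _ =>
      (hf k).aestronglyMeasurable.const_mul (a k)).mul (hf j).aestronglyMeasurable
  · filter_upwards [hbd n] with x hx
    rw [Real.norm_eq_abs, abs_mul]
    exact mul_le_mul_of_nonneg_right hx (abs_nonneg _)
  · filter_upwards [hlim] with x hx
    exact hx.mul_const _
  · simp_rw [hpartial]
    exact tendsto_const_nhds.congr' ((eventually_gt_atTop j).mono fun n hn => by simp [hn])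

theorem ae_eq_of_forall_integral_mul_eq {ι : Type*} (b : HilbertBasis ι ℝ (Lp ℝ 2 μ))
    {f : ι → α → ℝ} (hb : ∀ k, b k =ᵐ[μ] f k) {g h : α → ℝ} (hg : MemLp g 2 μ)
    (hh : MemLp h 2 μ) (hgh : ∀ k, ∫ x, g x * f k x ∂μ = ∫ x, h x * f k x ∂μ) : g =ᵐ[μ] h := by
  have hrepr : b.repr (hg.toLp g) = b.repr (hh.toLp h) := by
    refine lp.ext (funext fun k => ?_)
    rw [b.repr_apply_apply, b.repr_apply_apply,
      L2.real_inner_eq_integral_of_ae_eq (hb k) hg.coeFn_toLp,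
      L2.real_inner_eq_integral_of_ae_eq (hb k) hh.coeFn_toLp]
    simpa only [mul_comm] using hgh k
  exact (MemLp.toLp_eq_toLp_iff hg hh).mp (b.repr.injective hrepr)

end HilbertBasis

theorem exists_Ioo_subset_Icc_inter_ball {a b x δ : ℝ} (hab : a < b) (hx : x ∈ Icc a b)
    (hδ : 0 < δ) : ∃ c d, c < d ∧ Ioo c d ⊆ Icc a b ∩ Metric.ball x δ := by
  refine ⟨max a (x - δ), min b (x + δ), ?_, fun y hy => ?_⟩
  · simp only [max_lt_iff, lt_min_iff]
    exact ⟨⟨hab, by linarith [hx.2]⟩, by linarith [hx.1], by linarith⟩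
  · simp only [mem_Ioo, max_lt_iff, lt_min_iff] at hy
    rw [mem_inter_iff, Metric.mem_ball, Real.dist_eq, abs_lt]
    exact ⟨⟨hy.1.1.le, hy.2.1.le⟩, by linarith, by linarith⟩

theorem ContinuousOn.diag_nonneg_of_setIntegral_nonneg {r : ℝ × ℝ → ℝ} {a b : ℝ} (hab : a < b)
    (hr : ContinuousOn r (Icc a b ×ˢ Icc a b))
    (hnonneg : ∀ c d, Ioo c d ⊆ Icc a b → 0 ≤ ∫ z in Ioo c d ×ˢ Ioo c d, r z)
    {x : ℝ} (hx : x ∈ Icc a b) : 0 ≤ r (x, x) := by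
  by_contra! hneg
  obtain ⟨δ, hδ, hball⟩ :=
    Metric.continuousWithinAt_iff.mp (hr (x, x) ⟨hx, hx⟩) (-r (x, x)) (neg_pos.mpr hneg)
  obtain ⟨c, d, hcd, hsub⟩ := exists_Ioo_subset_Icc_inter_ball hab hx hδ
  set U := Ioo c d ×ˢ Ioo c d
  have hUsub : U ⊆ Icc a b ×ˢ Icc a b :=
    prod_mono (fun y hy => (hsub hy).1) fun y hy => (hsub hy).1
  have hr_neg : ∀ z ∈ U, 0 < -r z := by
    rintro ⟨y, y'⟩ ⟨hy, hy'⟩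
    have hdist : dist (y, y') (x, x) < δ :=
      max_lt (Metric.mem_ball.mp (hsub hy).2) (Metric.mem_ball.mp (hsub hy').2)
    have := hball (hUsub ⟨hy, hy'⟩) hdist
    rw [Real.dist_eq, abs_lt] at this
    linarith
  have hpos : 0 < ∫ z in U, -r z := by
    rw [setIntegral_pos_iff_support_of_nonneg_ae
      ((ae_restrict_mem (measurableSet_Ioo.prod measurableSet_Ioo)).mono fun z hz =>
        (hr_neg z hz).le)
      ((hr.integrableOn_compact (isCompact_Icc.prod isCompact_Icc)).mono_set hUsub).neg]
    have hsupp : (Function.support fun z => -r z) ∩ U = U :=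
      inter_eq_right.mpr fun z hz => (hr_neg z hz).ne'
    rw [hsupp]
    exact (isOpen_Ioo.prod isOpen_Ioo).measure_pos _ ⟨((c + d) / 2, (c + d) / 2),
      ⟨⟨by linarith, by linarith⟩, ⟨by linarith, by linarith⟩⟩⟩
  rw [integral_neg] at hpos
  linarith [hnonneg c d fun y hy => (hsub hy).1]

theorem ContinuousOn.memLp_of_isCompact {X E : Type*} [TopologicalSpace X] [MeasurableSpace X]
    [OpensMeasurableSpace X] [NormedAddCommGroup E] [SecondCountableTopologyEither X E]
    {μ : Measure X} [IsFiniteMeasureOnCompacts μ]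
    {s : Set X} {g : X → E} (hg : ContinuousOn g s) (hs : IsCompact s) (hsm : MeasurableSet s)
    (p : ℝ≥0∞) : MemLp g p (μ.restrict s) := by
  have : IsFiniteMeasure (μ.restrict s) := isFiniteMeasure_restrict.mpr hs.measure_lt_top.ne
  obtain ⟨C, hC⟩ := hs.exists_bound_of_continuousOn hg
  exact MemLp.of_bound (hg.aestronglyMeasurable hsm) C (ae_restrict_of_forall_mem hsm hC)

section Kernel

variable {K : ℝ → ℝ → ℝ}

theorem setIntegral_mul_setIntegral_kernel
    (hK : ContinuousOn (fun p : ℝ × ℝ => K p.1 p.2) (Icc 0 1 ×ˢ Icc 0 1))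
    (hsymm : ∀ x ∈ Icc (0:ℝ) 1, ∀ y ∈ Icc (0:ℝ) 1, K x y = K y x)
    {g : ℝ → ℝ} (hg : ContinuousOn g (Icc 0 1)) {c : ℝ}
    (heig : ∀ x ∈ Icc (0:ℝ) 1, ∫ y in Icc 0 1, K x y * g y = c * g x)
    {U : Set ℝ} (hU : U ⊆ Icc 0 1) (hUm : MeasurableSet U) :
    ∫ x in Icc 0 1, g x * ∫ y in U, K x y = c * ∫ y in U, g y := by
  have hint : Integrable (Function.uncurry fun x y => g x * K x y)
      ((volume.restrict (Icc 0 1)).prod (volume.restrict U)) := by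
    rw [Measure.prod_restrict, ← Measure.volume_eq_prod]
    refine (ContinuousOn.integrableOn_compact (isCompact_Icc.prod isCompact_Icc) ?_).mono_set
      (prod_mono subset_rfl hU)
    exact (hg.comp continuous_fst.continuousOn fun z hz => hz.1).mul hK
  calc ∫ x in Icc 0 1, g x * ∫ y in U, K x y
      = ∫ x in Icc 0 1, ∫ y in U, g x * K x y := by simp_rw [integral_const_mul]
    _ = ∫ y in U, ∫ x in Icc 0 1, g x * K x y := integral_integral_swap hint
    _ = ∫ y in U, c * g y := by
        refine setIntegral_congr_fun hUm fun y hy => ?_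
        rw [← heig y (hU hy)]
        refine setIntegral_congr_fun measurableSet_Icc fun x hx => ?_
        rw [hsymm x hx y (hU hy), mul_comm]
    _ = c * ∫ y in U, g y := integral_const_mul c _


theorem hasSum_mul_sq_setIntegral_eq_setIntegral_prod
    (hK : ContinuousOn (fun p : ℝ × ℝ => K p.1 p.2) (Icc 0 1 ×ˢ Icc 0 1))
    (hsymm : ∀ x ∈ Icc (0:ℝ) 1, ∀ y ∈ Icc (0:ℝ) 1, K x y = K y x)
    {f : ℕ → ℝ → ℝ} (hf : ∀ k, ContinuousOn (f k) (Icc 0 1))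
    (b : HilbertBasis ℕ ℝ (Lp ℝ 2 (volume.restrict (Icc (0:ℝ) 1))))
    (hb : ∀ k, (b k : ℝ → ℝ) =ᵐ[volume.restrict (Icc (0:ℝ) 1)] f k) {lam : ℕ → ℝ}
    (heig : ∀ k, ∀ x ∈ Icc (0:ℝ) 1, ∫ y in Icc 0 1, K x y * f k y = lam k * f k x)
    {U : Set ℝ} (hU : U ⊆ Icc 0 1) (hUm : MeasurableSet U) :
    HasSum (fun k => lam k * (∫ y in U, f k y) ^ 2) (∫ z in U ×ˢ U, K z.1 z.2) := by
  have hrestrict : (volume.restrict (Icc (0:ℝ) 1)).restrict U = volume.restrict U :=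
    Measure.restrict_restrict_of_subset hU
  have hμU : volume.restrict (Icc (0:ℝ) 1) U ≠ ∞ := measure_ne_top _ U
  set G : Lp ℝ 2 (volume.restrict (Icc (0:ℝ) 1)) := indicatorConstLp 2 hUm hμU (1 : ℝ)
  set T : ℝ → ℝ := fun x => ∫ y in U, K x y
  have hT : MemLp T 2 (volume.restrict (Icc (0:ℝ) 1)) := by
    obtain ⟨C, hC⟩ := (isCompact_Icc.prod isCompact_Icc).exists_bound_of_continuousOn hK
    refine MemLp.of_bound ?_ (C * volume.real U) (ae_restrict_of_forall_mem measurableSet_Icc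
      fun x hx => norm_setIntegral_le_of_norm_le_const
        (measure_Icc_lt_top.trans_le' (measure_mono hU)) fun y hy => hC (x, y) ⟨hx, hU hy⟩)
    refine AEStronglyMeasurable.integral_prod_right' (f := fun z : ℝ × ℝ => K z.1 z.2) ?_
    rw [Measure.prod_restrict, ← Measure.volume_eq_prod]
    exact (hK.aestronglyMeasurable (measurableSet_Icc.prod measurableSet_Icc)).mono_set
      (prod_mono subset_rfl hU)
  have hGb : ∀ k, ⟪G, b k⟫_ℝ = ∫ y in U, f k y := fun k => by
    rw [L2.inner_indicatorConstLp_one, ← hrestrict]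
    exact integral_congr_ae (ae_restrict_of_ae (hb k))
  have hbT : ∀ k, ⟪b k, hT.toLp T⟫_ℝ = lam k * ∫ y in U, f k y := fun k => by
    rw [L2.real_inner_eq_integral_of_ae_eq (hb k) hT.coeFn_toLp]
    exact setIntegral_mul_setIntegral_kernel hK hsymm (hf k) (heig k) hU hUm
  have hGT : ⟪G, hT.toLp T⟫_ℝ = ∫ z in U ×ˢ U, K z.1 z.2 := by
    rw [L2.inner_indicatorConstLp_one, integral_congr_ae (ae_restrict_of_ae hT.coeFn_toLp),
      hrestrict, Measure.volume_eq_prod, setIntegral_prod _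
        ((hK.integrableOn_compact (isCompact_Icc.prod isCompact_Icc)).mono_set (prod_mono hU hU))]
  rw [← hGT]
  refine (b.hasSum_inner_mul_inner G (hT.toLp T)).congr_fun fun k => ?_
  rw [hGb, hbT]
  ring

theorem sum_range_mul_sq_le_kernel_diag
    (hK : ContinuousOn (fun p : ℝ × ℝ => K p.1 p.2) (Icc 0 1 ×ˢ Icc 0 1))
    (hsymm : ∀ x ∈ Icc (0:ℝ) 1, ∀ y ∈ Icc (0:ℝ) 1, K x y = K y x)
    {f : ℕ → ℝ → ℝ} (hf : ∀ k, ContinuousOn (f k) (Icc 0 1))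
    (b : HilbertBasis ℕ ℝ (Lp ℝ 2 (volume.restrict (Icc (0:ℝ) 1))))
    (hb : ∀ k, (b k : ℝ → ℝ) =ᵐ[volume.restrict (Icc (0:ℝ) 1)] f k)
    {lam : ℕ → ℝ} (hlam : ∀ k, 0 ≤ lam k)
    (heig : ∀ k, ∀ x ∈ Icc (0:ℝ) 1, ∫ y in Icc 0 1, K x y * f k y = lam k * f k x)
    (n : ℕ) {x : ℝ} (hx : x ∈ Icc (0:ℝ) 1) :
    ∑ k ∈ Finset.range n, lam k * f k x ^ 2 ≤ K x x := by
  have hf₂ : ∀ k, ContinuousOn (fun z : ℝ × ℝ => lam k * f k z.1 * f k z.2) (Icc 0 1 ×ˢ Icc 0 1) :=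
    fun k => (continuousOn_const.mul ((hf k).comp continuous_fst.continuousOn fun z hz => hz.1)).mul
      ((hf k).comp continuous_snd.continuousOn fun z hz => hz.2)
  have hintegrable : ∀ {g : ℝ × ℝ → ℝ}, ContinuousOn g (Icc 0 1 ×ˢ Icc 0 1) →
      ∀ {U : Set ℝ}, U ⊆ Icc 0 1 → IntegrableOn g (U ×ˢ U) := fun hg _ hU =>
    (hg.integrableOn_compact (isCompact_Icc.prod isCompact_Icc)).mono_set (prod_mono hU hU)
  -- The truncated kernel `K - ∑ k < n, lam k • f k ⊗ f k` is positive semidefinite: by Parseval,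
  -- its integral over `U ×ˢ U` is the tail `∑ k ≥ n, lam k * (∫ y in U, f k y) ^ 2`.
  have hpsd := ContinuousOn.diag_nonneg_of_setIntegral_nonneg zero_lt_one
    (r := fun z => K z.1 z.2 - ∑ k ∈ Finset.range n, lam k * f k z.1 * f k z.2)
    (hK.sub (continuousOn_finsetSum _ fun k _ => hf₂ k)) (fun c d hcd => ?_) hx
  · simpa [sub_nonneg, sq, mul_assoc] using hpsd
  rw [integral_sub (hintegrable hK hcd) (integrable_finsetSum _ fun k _ => hintegrable (hf₂ k) hcd),
    integral_finsetSum _ fun k _ => hintegrable (hf₂ k) hcd, sub_nonneg]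
  refine le_of_eq_of_le (Finset.sum_congr rfl fun k _ => ?_) (sum_le_hasSum _
    (fun k _ => mul_nonneg (hlam k) (sq_nonneg _))
    (hasSum_mul_sq_setIntegral_eq_setIntegral_prod hK hsymm hf b hb heig hcd measurableSet_Ioo))
  simp_rw [mul_assoc, integral_const_mul]
  rw [Measure.volume_eq_prod, setIntegral_prod_mul, sq]

theorem hasSum_mul_sq_eq_kernel_diag
    (hK : ContinuousOn (fun p : ℝ × ℝ => K p.1 p.2) (Icc 0 1 ×ˢ Icc 0 1))
    (hsymm : ∀ x ∈ Icc (0:ℝ) 1, ∀ y ∈ Icc (0:ℝ) 1, K x y = K y x)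
    {f : ℕ → ℝ → ℝ} (hf : ∀ k, ContinuousOn (f k) (Icc 0 1))
    (b : HilbertBasis ℕ ℝ (Lp ℝ 2 (volume.restrict (Icc (0:ℝ) 1))))
    (hb : ∀ k, (b k : ℝ → ℝ) =ᵐ[volume.restrict (Icc (0:ℝ) 1)] f k)
    {lam : ℕ → ℝ} (hlam : ∀ k, 0 ≤ lam k)
    (heig : ∀ k, ∀ x ∈ Icc (0:ℝ) 1, ∫ y in Icc 0 1, K x y * f k y = lam k * f k x)
    {x : ℝ} (hx : x ∈ Icc (0:ℝ) 1) :
    HasSum (fun k => lam k * f k x ^ 2) (K x x) := by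
  obtain ⟨M, hM⟩ := (isCompact_Icc.prod isCompact_Icc).exists_bound_of_continuousOn hK
  have hbound : ∀ y ∈ Icc (0:ℝ) 1, ∀ n, ∑ k ∈ Finset.range n, lam k * f k y ^ 2 ≤ M :=
    fun y hy n => (sum_range_mul_sq_le_kernel_diag hK hsymm hf b hb hlam heig n hy).trans
      ((le_abs_self _).trans (hM (y, y) ⟨hy, hy⟩))
  have hsummable : ∀ y ∈ Icc (0:ℝ) 1, Summable fun k => lam k * f k y ^ 2 := fun y hy =>
    summable_of_sum_range_le (fun k => mul_nonneg (hlam k) (sq_nonneg _)) (hbound y hy)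
  set H : ℝ → ℝ := fun y => ∑' k, lam k * f k x * f k y
  have hunif : TendstoUniformlyOn (fun n y => ∑ k ∈ Finset.range n, lam k * f k x * f k y) H
      atTop (Icc 0 1) :=
    tendstoUniformlyOn_tsum_weighted_mul hlam (hsummable x hx) hbound
  have hH : ContinuousOn H (Icc 0 1) := hunif.continuousOn (Frequently.of_forall fun n =>
    continuousOn_finsetSum _ fun k _ => continuousOn_const.mul (hf k))
  have hKx : ContinuousOn (fun y => K x y) (Icc 0 1) :=
    hK.comp (Continuous.prodMk_right x).continuousOn fun y hy => ⟨hx, hy⟩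
  -- `H` and `K x ·` have the same coefficients `lam j * f j x`, so they agree on `[0, 1]`.
  have hcoeff : ∀ j, ∫ y in Icc 0 1, H y * f j y = lam j * f j x := by
    refine b.integral_mul_eq_of_tendsto_sum hb (M := M) (fun n => ?_) ?_
    · refine ae_restrict_of_forall_mem measurableSet_Icc fun y hy => abs_le_of_sq_le_sq ?_
        ((abs_nonneg _).trans (hM (x, x) ⟨hx, hx⟩))
      refine (Finset.weighted_sum_mul_sq_le_sq_mul_sq _ (fun k _ => hlam k) _ _).trans ?_
      rw [sq M]
      exact mul_le_mul (hbound x hx n) (hbound y hy n)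
        (Finset.sum_nonneg fun k _ => mul_nonneg (hlam k) (sq_nonneg _))
        ((abs_nonneg _).trans (hM (x, x) ⟨hx, hx⟩))
    · exact ae_restrict_of_forall_mem measurableSet_Icc fun y hy => hunif.tendsto_at hy
  have hKH : EqOn (fun y => K x y) H (Icc 0 1) :=
    Measure.eqOn_Icc_of_ae_eq volume zero_ne_one
      (b.ae_eq_of_forall_integral_mul_eq hb
        (hKx.memLp_of_isCompact isCompact_Icc measurableSet_Icc 2)
        (hH.memLp_of_isCompact isCompact_Icc measurableSet_Icc 2)
        fun j => (heig j x hx).trans (hcoeff j).symm) hKx hH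
  rw [show K x x = H x from hKH hx]
  have := (hsummable x hx).hasSum
  simp only [sq, ← mul_assoc] at this ⊢
  exact this

end Kernel

/-- Trace formula for a continuous symmetric kernel on `[0,1]` with nonnegative eigenvalues:
if the continuous eigenfunctions `f k` (eigenvalues `lam k ≥ 0`) form a Hilbert basis of
`L²([0,1])`, then `∑ k, lam k` converges to `∫₀¹ K x x dx`. -/
theorem trace_formula (K : ℝ → ℝ → ℝ)
    (hK : ContinuousOn (fun p : ℝ × ℝ => K p.1 p.2) (Icc 0 1 ×ˢ Icc 0 1))
    (hsymm : ∀ x ∈ Icc (0:ℝ) 1, ∀ y ∈ Icc (0:ℝ) 1, K x y = K y x)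
    (f : ℕ → ℝ → ℝ) (hf : ∀ k, ContinuousOn (f k) (Icc 0 1))
    (b : HilbertBasis ℕ ℝ (Lp ℝ 2 (volume.restrict (Icc (0:ℝ) 1))))
    (hb : ∀ k, (b k : ℝ → ℝ) =ᵐ[volume.restrict (Icc (0:ℝ) 1)] f k)
    (lam : ℕ → ℝ) (hlam : ∀ k, 0 ≤ lam k)
    (heig : ∀ k, ∀ x ∈ Icc (0:ℝ) 1, (∫ y in (0:ℝ)..1, K x y * f k y) = lam k * f k x) :
    HasSum lam (∫ x in (0:ℝ)..1, K x x) := by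
  have heig' : ∀ k, ∀ x ∈ Icc (0:ℝ) 1, ∫ y in Icc 0 1, K x y * f k y = lam k * f k x :=
    fun k x hx => by
      rw [integral_Icc_eq_integral_Ioc, ← intervalIntegral.integral_of_le zero_le_one, heig k x hx]
  have hnorm : ∀ k, ∫ x in Icc 0 1, lam k * f k x ^ 2 = lam k := fun k => by
    simp_rw [sq]
    rw [integral_const_mul, b.integral_mul_eq_ite hb, if_pos rfl, mul_one]
  have hsum := hasSum_integral_of_nonneg (μ := volume.restrict (Icc (0:ℝ) 1))
    (F := fun k x => lam k * f k x ^ 2) (g := fun x => K x x)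
    (fun k => (continuousOn_const.mul ((hf k).pow 2)).aestronglyMeasurable measurableSet_Icc)
    (fun k => Eventually.of_forall fun x => mul_nonneg (hlam k) (sq_nonneg (f k x)))
    (hK.comp (continuous_id.prodMk continuous_id).continuousOn
      fun x hx => ⟨hx, hx⟩).integrableOn_Icc
    (ae_restrict_of_forall_mem measurableSet_Icc fun x hx =>
      hasSum_mul_sq_eq_kernel_diag hK hsymm hf b hb hlam heig' hx)
  rw [intervalIntegral.integral_of_le zero_le_one, ← integral_Icc_eq_integral_Ioc]
  simpa only [hnorm] using hsum
end

section
/- Let u : [0,∞) × ℝ → ℝ be continuous, 1-periodic in the second variable (u(t,x+1) = u(t,x) for all t, x), continuously differentiable in t and twice continuously differentiable in x for t > 0, and suppose ∂u/∂t = ∂²u/∂x² holds for all t > 0 and x ∈ ℝ. If u(0,x) = 0 for all x ∈ ℝ, then u(t,x) = 0 for all t ≥ 0 and x ∈ ℝ. Consequently, two such solutions of the 1-periodic heat equation with the same continuous initial data coincide. -/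
open Real Set MeasureTheory

/-!
The energy `E t = ∫₀¹ u(t,x)² dx` is continuous on `[0, ∞)`, vanishes at `t = 0`, and for
`t > 0` it satisfies `E' = 2 ∫₀¹ u u_t = 2 ∫₀¹ u u_xx = -2 ∫₀¹ u_x² ≤ 0`, where the boundary
terms of the integration by parts cancel by periodicity. Hence `E ≡ 0`, so each continuous slice
`u(t, ·)` vanishes on `[0, 1]`, and by periodicity everywhere.
-/

theorem Function.Periodic.hasDerivAt_add_period {𝕜 F : Type*} [NontriviallyNormedField 𝕜]
    [NormedAddCommGroup F] [NormedSpace 𝕜 F] {f : 𝕜 → F} {f' : F} {c x : 𝕜}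
    (hf : Function.Periodic f c) (h : HasDerivAt f f' x) : HasDerivAt f f' (x + c) := by
  have h' : HasDerivAt (fun y => f (y - c)) f' (x + c) :=
    HasDerivAt.comp_sub_const (x + c) c (by rwa [add_sub_cancel_right])
  simpa only [hf.sub_eq] using h'

theorem Function.Periodic.integral_mul_deriv_deriv_eq_neg_integral_sq {f f' f'' : ℝ → ℝ} {c : ℝ}
    (hf : Function.Periodic f c) (hf' : ∀ x, HasDerivAt f (f' x) x)
    (hf'' : ∀ x, HasDerivAt f' (f'' x) x) (a : ℝ)
    (hint : IntervalIntegrable f'' volume a (a + c)) :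
    ∫ x in a..a + c, f x * f'' x = -∫ x in a..a + c, f' x ^ 2 := by
  have hf'_cont : Continuous f' := continuous_iff_continuousAt.2 fun x => (hf'' x).continuousAt
  have hf'_periodic : f' (a + c) = f' a := (hf' (a + c)).unique (hf.hasDerivAt_add_period (hf' a))
  rw [intervalIntegral.integral_mul_deriv_eq_deriv_mul (fun x _ => hf' x) (fun x _ => hf'' x)
    (hf'_cont.intervalIntegrable _ _) hint, hf a, hf'_periodic]
  simp only [sub_self, zero_sub, sq]

theorem Function.Periodic.integral_mul_deriv_deriv_nonpos {f f' f'' : ℝ → ℝ} {c : ℝ}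
    (hf : Function.Periodic f c) (hc : 0 ≤ c) (hf' : ∀ x, HasDerivAt f (f' x) x)
    (hf'' : ∀ x, HasDerivAt f' (f'' x) x) (a : ℝ)
    (hint : IntervalIntegrable f'' volume a (a + c)) :
    ∫ x in a..a + c, f x * f'' x ≤ 0 := by
  rw [hf.integral_mul_deriv_deriv_eq_neg_integral_sq hf' hf'' a hint, neg_nonpos]
  exact intervalIntegral.integral_nonneg (le_add_of_nonneg_right hc) fun x _ => sq_nonneg _

section ParametricIntegral

variable {E : Type*} [NormedAddCommGroup E] [NormedSpace ℝ E]

theorem hasDerivAt_intervalIntegral_of_continuousOn {F F' : ℝ → ℝ → E} {s : Set ℝ}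
    (hs : IsOpen s) (hF : ContinuousOn (fun p : ℝ × ℝ => F p.1 p.2) (s ×ˢ univ))
    (hF' : ContinuousOn (fun p : ℝ × ℝ => F' p.1 p.2) (s ×ˢ univ))
    (hderiv : ∀ t ∈ s, ∀ x, HasDerivAt (fun t => F t x) (F' t x) t) (a b : ℝ) {t₀ : ℝ}
    (ht₀ : t₀ ∈ s) :
    HasDerivAt (fun t => ∫ x in a..b, F t x) (∫ x in a..b, F' t₀ x) t₀ := by
  have hslice : ∀ t ∈ s, Continuous (F t) := fun t ht =>
    continuousOn_univ.mp (hF.uncurry_left (f := F) t ht)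
  obtain ⟨δ, hδ, hball⟩ := Metric.nhds_basis_closedBall.mem_iff.1 (hs.mem_nhds ht₀)
  obtain ⟨M, hM⟩ : ∃ M, ∀ p ∈ Metric.closedBall t₀ δ ×ˢ uIcc a b, ‖F' p.1 p.2‖ ≤ M :=
    (isCompact_closedBall t₀ δ).prod isCompact_uIcc |>.exists_bound_of_continuousOn
      (hF'.mono (prod_mono hball (subset_univ _)))
  refine (intervalIntegral.hasDerivAt_integral_of_dominated_loc_of_deriv_le
    (bound := fun _ => M) (Metric.closedBall_mem_nhds t₀ hδ) ?_
    ((hslice t₀ ht₀).intervalIntegrable a b)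
    (continuousOn_univ.mp (hF'.uncurry_left (f := F') t₀ ht₀)).aestronglyMeasurable
    (ae_of_all _ fun x hx t ht => hM (t, x) ⟨ht, uIoc_subset_uIcc hx⟩)
    intervalIntegrable_const (ae_of_all _ fun x _ t ht => hderiv t (hball ht) x)).2
  filter_upwards [hs.mem_nhds ht₀] with t ht using (hslice t ht).aestronglyMeasurable

theorem continuousOn_Ici_intervalIntegral_of_continuousOn {F : ℝ → ℝ → E} {t₀ : ℝ}
    (hF : ContinuousOn (fun p : ℝ × ℝ => F p.1 p.2) (Ici t₀ ×ˢ univ)) (a b : ℝ) :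
    ContinuousOn (fun t => ∫ x in a..b, F t x) (Ici t₀) := by
  -- freezing time below `t₀` extends `F` continuously to the whole plane
  have hG : Continuous fun p : ℝ × ℝ => F (max p.1 t₀) p.2 :=
    continuousOn_univ.mp <| hF.comp
      ((continuous_fst.max continuous_const).prodMk continuous_snd).continuousOn
      fun p _ => ⟨mem_Ici.2 (le_max_right p.1 t₀), trivial⟩
  refine (intervalIntegral.continuous_parametric_intervalIntegral_of_continuous'
    (μ := volume) (f := fun t x => F (max t t₀) x) hG a b)
    |>.continuousOn.congr fun t ht => ?_
  simp only [max_eq_left (mem_Ici.mp ht)]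

end ParametricIntegral

theorem eqOn_zero_of_integral_sq_eq_zero {f : ℝ → ℝ} {a b : ℝ} (hab : a < b)
    (hf : ContinuousOn f (Icc a b)) (h : ∫ x in a..b, f x ^ 2 = 0) : EqOn f 0 (Icc a b) := by
  have hae : (fun x => f x ^ 2) =ᵐ[volume.restrict (Ioc a b)] 0 :=
    (intervalIntegral.integral_eq_zero_iff_of_le_of_nonneg_ae hab.le
      (ae_of_all _ fun x => sq_nonneg (f x)) ((hf.pow 2).intervalIntegrable_of_Icc hab.le)).1 h
  rw [Measure.restrict_congr_set Ioc_ae_eq_Icc] at hae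
  intro x hx
  exact (pow_eq_zero_iff two_ne_zero).1
    (Measure.eqOn_Icc_of_ae_eq volume hab.ne hae (hf.pow 2) continuousOn_const hx)

theorem Function.Periodic.eq_zero_of_integral_sq_eq_zero {f : ℝ → ℝ} {c : ℝ}
    (hf : Function.Periodic f c) (hc : 0 < c) (hcont : Continuous f)
    (h : ∫ x in (0 : ℝ)..c, f x ^ 2 = 0) : f = 0 := by
  funext x
  obtain ⟨y, hy, hxy⟩ := hf.exists_mem_Ico₀ hc x
  rw [hxy]
  exact eqOn_zero_of_integral_sq_eq_zero hc hcont.continuousOn h (Ico_subset_Icc_self hy)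

theorem periodic_heat_uniqueness_general (u ut ux uxx : ℝ → ℝ → ℝ)
    (hcont : ContinuousOn (fun p : ℝ × ℝ => u p.1 p.2) (Ici 0 ×ˢ univ))
    (hper : ∀ t ≥ (0:ℝ), ∀ x : ℝ, u t (x + 1) = u t x)
    (hut : ∀ t : ℝ, 0 < t → ∀ x : ℝ, HasDerivAt (fun s => u s x) (ut t x) t)
    (hux : ∀ t : ℝ, 0 < t → ∀ x : ℝ, HasDerivAt (fun z => u t z) (ux t x) x)
    (huxx : ∀ t : ℝ, 0 < t → ∀ x : ℝ, HasDerivAt (fun z => ux t z) (uxx t x) x)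
    (hut_cont : ContinuousOn (fun p : ℝ × ℝ => ut p.1 p.2) (Ioi 0 ×ˢ univ))
    (hheat : ∀ t : ℝ, 0 < t → ∀ x : ℝ, ut t x = uxx t x)
    (hinit : ∀ x : ℝ, u 0 x = 0) :
    ∀ t ≥ (0:ℝ), ∀ x : ℝ, u t x = 0 := by
  have hcont_pos : ContinuousOn (fun p : ℝ × ℝ => u p.1 p.2) (Ioi 0 ×ˢ univ) :=
    hcont.mono (prod_mono Ioi_subset_Ici_self subset_rfl)
  set E := fun t => ∫ x in (0:ℝ)..1, u t x ^ 2 with hE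
  have hE_deriv : ∀ t ∈ Ioi (0:ℝ), HasDerivAt E (∫ x in (0:ℝ)..1, 2 * u t x * ut t x) t :=
    fun t ht => hasDerivAt_intervalIntegral_of_continuousOn isOpen_Ioi (hcont_pos.pow 2)
      ((continuousOn_const.mul hcont_pos).mul hut_cont)
      (fun s hs x => by simpa using (hut s hs x).pow 2) 0 1 ht
  have hE_deriv_nonpos : ∀ t ∈ Ioi (0:ℝ), ∫ x in (0:ℝ)..1, 2 * u t x * ut t x ≤ 0 := by
    intro t ht
    have huxx_int : IntervalIntegrable (uxx t) volume 0 (0 + 1) := by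
      rw [← funext (hheat t ht)]
      exact (continuousOn_univ.mp (hut_cont.uncurry_left (f := ut) t ht)).intervalIntegrable _ _
    have hdiss := Function.Periodic.integral_mul_deriv_deriv_nonpos (hper t ht.le) zero_le_one
      (hux t ht) (huxx t ht) 0 huxx_int
    simp_rw [hheat t ht, mul_assoc, intervalIntegral.integral_const_mul]
    exact mul_nonpos_of_nonneg_of_nonpos zero_le_two (by simpa using hdiss)
  have hE_anti : AntitoneOn E (Ici 0) :=
    antitoneOn_of_hasDerivWithinAt_nonpos (convex_Ici 0)
      (continuousOn_Ici_intervalIntegral_of_continuousOn (hcont.pow 2) 0 1)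
      (by simpa using fun t ht => (hE_deriv t ht).hasDerivWithinAt)
      (by simpa using hE_deriv_nonpos)
  intro t ht
  have hEt : E t = 0 := le_antisymm
    (by simpa [hE, hinit] using hE_anti self_mem_Ici ht ht)
    (intervalIntegral.integral_nonneg zero_le_one fun x _ => sq_nonneg _)
  exact congrFun (Function.Periodic.eq_zero_of_integral_sq_eq_zero (hper t ht) one_pos
    (continuousOn_univ.mp (hcont.uncurry_left (f := u) t ht)) hEt)

/-- Uniqueness for the 1-periodic heat equation: a continuous solution `u` of
`∂u/∂t = ∂²u/∂x²` (1-periodic in `x`, `C¹` in `t` and `C²` in `x` for `t > 0`) with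
`u (0, ·) = 0` vanishes identically; hence two such solutions with the same continuous
initial data coincide. -/
theorem periodic_heat_uniqueness (u ut ux uxx : ℝ → ℝ → ℝ)
    (hcont : ContinuousOn (fun p : ℝ × ℝ => u p.1 p.2) (Ici 0 ×ˢ univ))
    (hper : ∀ t ≥ (0:ℝ), ∀ x : ℝ, u t (x + 1) = u t x)
    (hut : ∀ t : ℝ, 0 < t → ∀ x : ℝ, HasDerivAt (fun s => u s x) (ut t x) t)
    (hux : ∀ t : ℝ, 0 < t → ∀ x : ℝ, HasDerivAt (fun z => u t z) (ux t x) x)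
    (huxx : ∀ t : ℝ, 0 < t → ∀ x : ℝ, HasDerivAt (fun z => ux t z) (uxx t x) x)
    (hut_cont : ContinuousOn (fun p : ℝ × ℝ => ut p.1 p.2) (Ioi 0 ×ˢ univ))
    (hux_cont : ContinuousOn (fun p : ℝ × ℝ => ux p.1 p.2) (Ioi 0 ×ˢ univ))
    (huxx_cont : ContinuousOn (fun p : ℝ × ℝ => uxx p.1 p.2) (Ioi 0 ×ˢ univ))
    (hheat : ∀ t : ℝ, 0 < t → ∀ x : ℝ, ut t x = uxx t x)
    (hinit : ∀ x : ℝ, u 0 x = 0) :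
    ∀ t ≥ (0:ℝ), ∀ x : ℝ, u t x = 0 :=
  periodic_heat_uniqueness_general u ut ux uxx hcont hper hut hux huxx hut_cont hheat hinit
end
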